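/- arXiv:1809.09573 — 2 statements merged into one kernel-verified Lean document; each statement's English description precedes it below -/
import Mathlib

section
/- Let M ∈ ℝⁿˣⁿ be symmetric positive semidefinite with eigendecomposition M = Σᵢ λᵢ·uᵢuᵢᵀ, λ₁ > λ₂ ≥ … ≥ λₙ ≥ 0, and let f(x) = (1/4)·‖xxᵀ − M‖_F². Then: (i) x ∈ ℝⁿ is a critical point of f (i.e., ∇f(x) = (xxᵀ − M)x = 0) if and only if Mx = ‖x‖₂²·x; in particular 0 and ±√λₖ·uₖ (1 ≤ k ≤ n) are critical points; (ii) ∇²f(±√λ₁·u₁) ≻ 0, so ±√λ₁·u₁ are local minima (and they are global minima of f); (iii) for each 2 ≤ k ≤ n with λₖ > 0, the points ±√λₖ·uₖ satisfy λ_min(∇²f(±√λₖ·uₖ)) < 0 < λ_max(∇²f(±√λₖ·uₖ)), i.e., they are strict saddle points; (iv) ∇²f(0) = −M ⪯ 0, so 0 is a local maximum if λₙ > 0 and a strict saddle point if λₙ = 0 and λ₁ > 0. -/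
open Matrix

/-- The Euclidean (ℓ₂) norm of a vector in `ℝⁿ`. -/
noncomputable def l2norm {p : ℕ} (v : Fin p → ℝ) : ℝ :=
  Real.sqrt (∑ i, v i ^ 2)

/-- The Frobenius norm of a real matrix. -/
noncomputable def frobNorm {p q : ℕ} (A : Matrix (Fin p) (Fin q) ℝ) : ℝ :=
  Real.sqrt (∑ i, ∑ j, (A i j) ^ 2)

/-- The rank-1 matrix factorization loss `f(x) = ¼‖xxᵀ − M‖_F²`. -/
noncomputable def rankOneLoss {n : ℕ} (M : Matrix (Fin n) (Fin n) ℝ) (x : Fin n → ℝ) : ℝ :=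
  (1 / 4) * frobNorm (Matrix.vecMulVec x x - M) ^ 2

/-- The Hessian `∇²f(x) = ‖x‖₂² Iₙ + 2xxᵀ − M` of the rank-1 factorization loss. -/
noncomputable def rankOneHess {n : ℕ} (M : Matrix (Fin n) (Fin n) ℝ) (x : Fin n → ℝ) :
    Matrix (Fin n) (Fin n) ℝ :=
  l2norm x ^ 2 • (1 : Matrix (Fin n) (Fin n) ℝ) + (2 : ℝ) • Matrix.vecMulVec x x - M

/-! Write `M = ∑ᵢ λᵢ uᵢuᵢᵀ` and expand in the orthonormal basis `(uᵢ)`, with coordinates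
`cᵢ = uᵢ ⬝ v`. Then `‖v‖² = ∑ cᵢ²`, `vᵀMv = ∑ λᵢ cᵢ²`, and at a point `x = ±√λₖ uₖ` the Hessian
is diagonal in this basis with entries `λₖ − λᵢ` for `i ≠ k` and `2λₖ` for `i = k`. These are all
positive when `k` is the top index (thanks to the gap `λ₁ > λ₂`), and of both signs when `k` is not.
The global statements come from `4 f(y) = ‖y‖⁴ − 2 yᵀMy + ‖M‖_F²` together with the Rayleigh
bounds `λₙ‖y‖² ≤ yᵀMy ≤ λ₁‖y‖²`. -/

section Spectral

variable {m : Type*} [Fintype m] {M : Matrix m m ℝ} {lam : m → ℝ} {u : m → m → ℝ}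

lemma isSymm_of_eq_sum_smul_vecMulVec (hdecomp : M = ∑ i, lam i • vecMulVec (u i) (u i)) :
    M.IsSymm := by
  rw [hdecomp, IsSymm, transpose_sum]
  simp only [transpose_smul, transpose_vecMulVec]

lemma mulVec_eq_smul_of_eq_sum_smul_vecMulVec [DecidableEq m]
    (horth : ∀ i j, u i ⬝ᵥ u j = if i = j then 1 else 0)
    (hdecomp : M = ∑ i, lam i • vecMulVec (u i) (u i)) (k : m) :
    M *ᵥ u k = lam k • u k := by
  simp [hdecomp, sum_mulVec, smul_mulVec, vecMulVec_mulVec, horth, op_smul_eq_smul]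

lemma dotProduct_mulVec_eq_sum_of_eq_sum_smul_vecMulVec
    (hdecomp : M = ∑ i, lam i • vecMulVec (u i) (u i)) (v : m → ℝ) :
    v ⬝ᵥ M *ᵥ v = ∑ i, lam i * (u i ⬝ᵥ v) ^ 2 := by
  simp only [hdecomp, sum_mulVec, dotProduct_sum, smul_mulVec, vecMulVec_mulVec,
    op_smul_eq_smul, dotProduct_smul, smul_eq_mul, dotProduct_comm v (u _)]
  exact Finset.sum_congr rfl fun i _ => by ring

variable [DecidableEq m]

lemma dotProduct_self_eq_sum_sq_of_orthonormal
    (horth : ∀ i j, u i ⬝ᵥ u j = if i = j then 1 else 0) (v : m → ℝ) :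
    v ⬝ᵥ v = ∑ i, (u i ⬝ᵥ v) ^ 2 := by
  have hUUt : of u * (of u)ᵀ = 1 := by
    ext i j
    simpa [mul_apply, one_apply, dotProduct] using horth i j
  have hUtU : (of u)ᵀ * of u = 1 := mul_eq_one_comm.mp hUUt
  calc v ⬝ᵥ v = v ⬝ᵥ ((of u)ᵀ * of u) *ᵥ v := by rw [hUtU, one_mulVec]
    _ = (of u *ᵥ v) ⬝ᵥ (of u *ᵥ v) := by
      rw [← mulVec_mulVec, dotProduct_mulVec, vecMul_transpose]
    _ = ∑ i, (u i ⬝ᵥ v) ^ 2 := by simp [dotProduct, mulVec, sq]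

lemma sum_mul_sq_dotProduct_of_orthonormal (horth : ∀ i j, u i ⬝ᵥ u j = if i = j then 1 else 0)
    (w : m → ℝ) (j : m) : ∑ i, w i * (u i ⬝ᵥ u j) ^ 2 = w j := by
  simp [horth]

lemma sum_mul_sq_dotProduct_pos_of_orthonormal
    (horth : ∀ i j, u i ⬝ᵥ u j = if i = j then 1 else 0) {w : m → ℝ} (hw : ∀ i, 0 < w i)
    {v : m → ℝ} (hv : v ≠ 0) : 0 < ∑ i, w i * (u i ⬝ᵥ v) ^ 2 := by
  obtain ⟨j, hj⟩ : ∃ j, u j ⬝ᵥ v ≠ 0 := by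
    by_contra! h
    apply hv
    rw [← dotProduct_self_eq_zero, dotProduct_self_eq_sum_sq_of_orthonormal horth]
    simp [h]
  exact Finset.sum_pos' (fun i _ => mul_nonneg (hw i).le (sq_nonneg _))
    ⟨j, Finset.mem_univ j, mul_pos (hw j) (sq_pos_of_ne_zero hj)⟩

lemma dotProduct_mulVec_le_of_eq_sum_smul_vecMulVec
    (horth : ∀ i j, u i ⬝ᵥ u j = if i = j then 1 else 0)
    (hdecomp : M = ∑ i, lam i • vecMulVec (u i) (u i)) {a : ℝ} (hlam : ∀ i, lam i ≤ a)
    (v : m → ℝ) : v ⬝ᵥ M *ᵥ v ≤ a * (v ⬝ᵥ v) := by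
  rw [dotProduct_mulVec_eq_sum_of_eq_sum_smul_vecMulVec hdecomp,
    dotProduct_self_eq_sum_sq_of_orthonormal horth, Finset.mul_sum]
  exact Finset.sum_le_sum fun i _ => mul_le_mul_of_nonneg_right (hlam i) (sq_nonneg _)

lemma le_dotProduct_mulVec_of_eq_sum_smul_vecMulVec
    (horth : ∀ i j, u i ⬝ᵥ u j = if i = j then 1 else 0)
    (hdecomp : M = ∑ i, lam i • vecMulVec (u i) (u i)) {a : ℝ} (hlam : ∀ i, a ≤ lam i)
    (v : m → ℝ) : a * (v ⬝ᵥ v) ≤ v ⬝ᵥ M *ᵥ v := by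
  rw [dotProduct_mulVec_eq_sum_of_eq_sum_smul_vecMulVec hdecomp,
    dotProduct_self_eq_sum_sq_of_orthonormal horth, Finset.mul_sum]
  exact Finset.sum_le_sum fun i _ => mul_le_mul_of_nonneg_right (hlam i) (sq_nonneg _)

end Spectral

section Loss

variable {n : ℕ} (M : Matrix (Fin n) (Fin n) ℝ)

lemma l2norm_sq (v : Fin n → ℝ) : l2norm v ^ 2 = v ⬝ᵥ v := by
  rw [l2norm, Real.sq_sqrt (Finset.sum_nonneg fun i _ => sq_nonneg _)]
  simp [dotProduct, sq]

lemma frobNorm_sq {p q : ℕ} (A : Matrix (Fin p) (Fin q) ℝ) :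
    frobNorm A ^ 2 = ∑ i, ∑ j, A i j ^ 2 :=
  Real.sq_sqrt (Finset.sum_nonneg fun _ _ => Finset.sum_nonneg fun _ _ => sq_nonneg _)

lemma rankOneLoss_eq (x : Fin n → ℝ) :
    rankOneLoss M x = ((x ⬝ᵥ x) ^ 2 - 2 * (x ⬝ᵥ M *ᵥ x) + frobNorm M ^ 2) / 4 := by
  have hsq : (x ⬝ᵥ x) ^ 2 = ∑ i, ∑ j, x i ^ 2 * x j ^ 2 := by
    simp only [dotProduct, sq, Finset.sum_mul_sum]
  have hquad : x ⬝ᵥ M *ᵥ x = ∑ i, ∑ j, x i * M i j * x j := by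
    simp only [dotProduct, mulVec, Finset.mul_sum]
    exact Finset.sum_congr rfl fun _ _ => Finset.sum_congr rfl fun _ _ => by ring
  have hexpand : frobNorm (vecMulVec x x - M) ^ 2 = (x ⬝ᵥ x) ^ 2 - 2 * (x ⬝ᵥ M *ᵥ x)
      + frobNorm M ^ 2 := by
    simp only [frobNorm_sq, hsq, hquad, Finset.mul_sum, ← Finset.sum_sub_distrib,
      ← Finset.sum_add_distrib, Matrix.sub_apply, vecMulVec_apply]
    exact Finset.sum_congr rfl fun _ _ => Finset.sum_congr rfl fun _ _ => by ring
  rw [rankOneLoss, hexpand]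
  ring

lemma mulVec_vecMulVec_sub_self_eq_zero_iff (x : Fin n → ℝ) :
    (vecMulVec x x - M) *ᵥ x = 0 ↔ M *ᵥ x = l2norm x ^ 2 • x := by
  rw [sub_mulVec, vecMulVec_mulVec, op_smul_eq_smul, sub_eq_zero, l2norm_sq, eq_comm]

lemma dotProduct_rankOneHess_mulVec (x v : Fin n → ℝ) :
    v ⬝ᵥ rankOneHess M x *ᵥ v = (x ⬝ᵥ x) * (v ⬝ᵥ v) + 2 * (x ⬝ᵥ v) ^ 2 - v ⬝ᵥ M *ᵥ v := by
  simp only [rankOneHess, sub_mulVec, add_mulVec, smul_mulVec, one_mulVec, vecMulVec_mulVec,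
    op_smul_eq_smul, dotProduct_sub, dotProduct_add, dotProduct_smul, smul_eq_mul, l2norm_sq,
    dotProduct_comm v x]
  ring

lemma rankOneHess_zero : rankOneHess M 0 = -M := by
  simp [rankOneHess, l2norm]

lemma isHermitian_rankOneHess (hM : M.IsSymm) (x : Fin n → ℝ) :
    (rankOneHess M x).IsHermitian :=
  isHermitian_iff_isSymm.mpr <|
    ((isSymm_one.smul _).add (IsSymm.smul (A := vecMulVec x x) (transpose_vecMulVec x x) 2)).sub hM

lemma rankOneLoss_le_of_dotProduct_mulVec_le {a : ℝ} (hM : ∀ v, v ⬝ᵥ M *ᵥ v ≤ a * (v ⬝ᵥ v))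
    {x : Fin n → ℝ} (hx : x ⬝ᵥ x = a) (hMx : M *ᵥ x = a • x) (y : Fin n → ℝ) :
    rankOneLoss M x ≤ rankOneLoss M y := by
  rw [rankOneLoss_eq, rankOneLoss_eq, hMx, dotProduct_smul, hx, smul_eq_mul]
  nlinarith [hM y, sq_nonneg (y ⬝ᵥ y - a)]

lemma isLocalMax_rankOneLoss_zero {a : ℝ} (ha : 0 < a)
    (hM : ∀ v, a * (v ⬝ᵥ v) ≤ v ⬝ᵥ M *ᵥ v) : IsLocalMax (rankOneLoss M) 0 := by
  have hnhds : {y : Fin n → ℝ | y ⬝ᵥ y < 2 * a} ∈ nhds 0 :=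
    (isOpen_lt (continuous_id.dotProduct continuous_id) continuous_const).mem_nhds
      (by simpa using ha)
  filter_upwards [hnhds] with y hy
  have hy0 : 0 ≤ y ⬝ᵥ y := by simpa using dotProduct_star_self_nonneg y
  rw [rankOneLoss_eq, rankOneLoss_eq]
  simp only [dotProduct_zero, mulVec_zero]
  nlinarith [hM y, (hy : y ⬝ᵥ y < 2 * a)]

/-- `f(tv) = f(0) + t⁴‖v‖⁴/4 - t²vᵀMv/2`, so `f` increases away from `0` along `v`. -/
lemma not_isLocalMax_rankOneLoss_zero {v : Fin n → ℝ} (hv : v ≠ 0) (hMv : v ⬝ᵥ M *ᵥ v ≤ 0) :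
    ¬ IsLocalMax (rankOneLoss M) 0 := by
  intro hmax
  have hline : Filter.Tendsto (fun t : ℝ => t • v) (nhdsWithin 0 {0}ᶜ) (nhds 0) := by
    have hcont : Continuous fun t : ℝ => t • v := continuous_id.smul continuous_const
    exact (hcont.tendsto' 0 0 (zero_smul ℝ v)).mono_left nhdsWithin_le_nhds
  obtain ⟨t, hle, ht⟩ := ((hline.eventually hmax).and self_mem_nhdsWithin).exists
  have hv2 : 0 < v ⬝ᵥ v := by
    simpa using dotProduct_star_self_pos_iff.mpr hv
  have ht2 : 0 < t ^ 2 := sq_pos_of_ne_zero ht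
  rw [rankOneLoss_eq, rankOneLoss_eq] at hle
  simp only [dotProduct_zero, mulVec_zero, mulVec_smul, smul_dotProduct, dotProduct_smul,
    smul_eq_mul] at hle
  nlinarith [mul_pos (mul_pos ht2 ht2) (mul_pos hv2 hv2), mul_nonneg ht2.le (neg_nonneg.mpr hMv)]

end Loss

lemma sign_mul_sqrt_sq {ε a : ℝ} (hε : ε = 1 ∨ ε = -1) (ha : 0 ≤ a) : (ε * √a) ^ 2 = a := by
  rcases hε with rfl | rfl <;> simp [ha]

section Eigen

variable {n : ℕ} {M : Matrix (Fin n) (Fin n) ℝ} {lam : Fin n → ℝ} {u : Fin n → Fin n → ℝ}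

lemma mulVec_vecMulVec_sub_smul_eigvec_eq_zero
    (horth : ∀ i j, u i ⬝ᵥ u j = if i = j then 1 else 0)
    (hdecomp : M = ∑ i, lam i • vecMulVec (u i) (u i)) {k : Fin n} {c : ℝ} (hc : c ^ 2 = lam k) :
    (vecMulVec (c • u k) (c • u k) - M) *ᵥ (c • u k) = 0 := by
  rw [mulVec_vecMulVec_sub_self_eq_zero_iff, l2norm_sq, mulVec_smul,
    mulVec_eq_smul_of_eq_sum_smul_vecMulVec horth hdecomp, smul_dotProduct, dotProduct_smul, horth,
    smul_comm c, ← hc]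
  simp [sq]

lemma dotProduct_rankOneHess_smul_eigvec_mulVec
    (horth : ∀ i j, u i ⬝ᵥ u j = if i = j then 1 else 0)
    (hdecomp : M = ∑ i, lam i • vecMulVec (u i) (u i)) {k : Fin n} {c : ℝ} (hc : c ^ 2 = lam k)
    (v : Fin n → ℝ) :
    v ⬝ᵥ rankOneHess M (c • u k) *ᵥ v =
      ∑ i, (lam k - lam i + if i = k then 2 * lam k else 0) * (u i ⬝ᵥ v) ^ 2 := by
  rw [dotProduct_rankOneHess_mulVec, dotProduct_mulVec_eq_sum_of_eq_sum_smul_vecMulVec hdecomp,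
    dotProduct_self_eq_sum_sq_of_orthonormal horth v]
  simp only [smul_dotProduct, dotProduct_smul, horth, smul_eq_mul, add_mul, Finset.sum_add_distrib,
    ite_mul, zero_mul, Finset.sum_ite_eq', Finset.mem_univ, if_true, sub_mul,
    Finset.sum_sub_distrib, ← Finset.mul_sum]
  rw [← hc]
  ring

lemma rankOneLoss_smul_eigvec_le (horth : ∀ i j, u i ⬝ᵥ u j = if i = j then 1 else 0)
    (hdecomp : M = ∑ i, lam i • vecMulVec (u i) (u i)) {k : Fin n} {c : ℝ} (hc : c ^ 2 = lam k)
    (htop : ∀ i, lam i ≤ lam k) (y : Fin n → ℝ) : rankOneLoss M (c • u k) ≤ rankOneLoss M y := by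
  refine rankOneLoss_le_of_dotProduct_mulVec_le M
    (dotProduct_mulVec_le_of_eq_sum_smul_vecMulVec horth hdecomp htop) ?_ ?_ y
  · simp [horth, ← hc, sq]
  · rw [mulVec_smul, mulVec_eq_smul_of_eq_sum_smul_vecMulVec horth hdecomp, smul_comm]

lemma posDef_rankOneHess_smul_eigvec (horth : ∀ i j, u i ⬝ᵥ u j = if i = j then 1 else 0)
    (hdecomp : M = ∑ i, lam i • vecMulVec (u i) (u i)) {k : Fin n} {c : ℝ} (hc : c ^ 2 = lam k)
    (hk : 0 < lam k) (hgap : ∀ i ≠ k, lam i < lam k) : (rankOneHess M (c • u k)).PosDef := by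
  refine .of_dotProduct_mulVec_pos
    (isHermitian_rankOneHess M (isSymm_of_eq_sum_smul_vecMulVec hdecomp) _) fun v hv => ?_
  rw [star_trivial, dotProduct_rankOneHess_smul_eigvec_mulVec horth hdecomp hc]
  refine sum_mul_sq_dotProduct_pos_of_orthonormal horth (fun i => ?_) hv
  by_cases hi : i = k
  · simp [hi, hk]
  · simp [hi, hgap i hi]

lemma eigvec_dotProduct_rankOneHess_smul_eigvec_mulVec
    (horth : ∀ i j, u i ⬝ᵥ u j = if i = j then 1 else 0)
    (hdecomp : M = ∑ i, lam i • vecMulVec (u i) (u i)) {k : Fin n} {c : ℝ} (hc : c ^ 2 = lam k)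
    (j : Fin n) :
    u j ⬝ᵥ rankOneHess M (c • u k) *ᵥ u j = lam k - lam j + if j = k then 2 * lam k else 0 := by
  rw [dotProduct_rankOneHess_smul_eigvec_mulVec horth hdecomp hc,
    sum_mul_sq_dotProduct_of_orthonormal horth]

end Eigen

/-- **Global landscape of rank-1 matrix factorization.**
For `M = ∑ᵢ λᵢ uᵢuᵢᵀ` symmetric PSD with `λ₁ > λ₂ ≥ … ≥ λₙ ≥ 0` and `f(x) = ¼‖xxᵀ − M‖_F²`:
(i) `x` is a critical point iff `Mx = ‖x‖₂² x`; in particular `0` and `±√λₖ uₖ` are critical;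
(ii) `∇²f(±√λ₁ u₁) ≻ 0`, and `±√λ₁ u₁` are local (indeed global) minima;
(iii) for `k ≥ 2` with `λₖ > 0` the points `±√λₖ uₖ` are strict saddles:
`λ_min(∇²f) < 0 < λ_max(∇²f)` there;
(iv) `∇²f(0) = −M`, and `0` is a local maximum if `λₙ > 0`, while it is a strict saddle point
if `λₙ = 0` and `λ₁ > 0`. -/
theorem rank_one_factorization_global_landscape
    (n : ℕ) (hn : 1 < n)
    (M : Matrix (Fin n) (Fin n) ℝ)
    (lam : Fin n → ℝ) (u : Fin n → (Fin n → ℝ))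
    (horth : ∀ i j : Fin n, dotProduct (u i) (u j) = if i = j then 1 else 0)
    (hdecomp : M = ∑ i, lam i • Matrix.vecMulVec (u i) (u i))
    (hmono : Antitone lam)
    (hnonneg : ∀ i, 0 ≤ lam i)
    (hgap : lam ⟨1, hn⟩ < lam ⟨0, by omega⟩) :
    -- (i) characterization of critical points
    ((∀ x : Fin n → ℝ,
        Matrix.mulVec (Matrix.vecMulVec x x - M) x = 0 ↔
          M.mulVec x = l2norm x ^ 2 • x)
      ∧ Matrix.mulVec (Matrix.vecMulVec (0 : Fin n → ℝ) 0 - M) (0 : Fin n → ℝ) = 0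
      ∧ ∀ (k : Fin n) (ε : ℝ), ε = 1 ∨ ε = -1 →
          Matrix.mulVec
            (Matrix.vecMulVec ((ε * Real.sqrt (lam k)) • u k) ((ε * Real.sqrt (lam k)) • u k) - M)
            ((ε * Real.sqrt (lam k)) • u k) = 0)
    -- (ii) ±√λ₁ u₁ are local minima with positive definite Hessian, and global minima
    ∧ (∀ ε : ℝ, ε = 1 ∨ ε = -1 →
        (rankOneHess M ((ε * Real.sqrt (lam ⟨0, by omega⟩)) • u ⟨0, by omega⟩)).PosDef
        ∧ IsLocalMin (rankOneLoss M) ((ε * Real.sqrt (lam ⟨0, by omega⟩)) • u ⟨0, by omega⟩)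
        ∧ ∀ y : Fin n → ℝ,
            rankOneLoss M ((ε * Real.sqrt (lam ⟨0, by omega⟩)) • u ⟨0, by omega⟩)
              ≤ rankOneLoss M y)
    -- (iii) ±√λₖ uₖ (k ≥ 2, λₖ > 0) are strict saddle points
    ∧ (∀ k : Fin n, 1 ≤ (k : ℕ) → 0 < lam k → ∀ ε : ℝ, ε = 1 ∨ ε = -1 →
        (∃ v : Fin n → ℝ,
          dotProduct v
            ((rankOneHess M ((ε * Real.sqrt (lam k)) • u k)).mulVec v) < 0)
        ∧ (∃ w : Fin n → ℝ,
          0 < dotProduct w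
            ((rankOneHess M ((ε * Real.sqrt (lam k)) • u k)).mulVec w)))
    -- (iv) behavior at the origin
    ∧ (rankOneHess M (0 : Fin n → ℝ) = -M
        ∧ (0 < lam ⟨n - 1, by omega⟩ → IsLocalMax (rankOneLoss M) (0 : Fin n → ℝ))
        ∧ (lam ⟨n - 1, by omega⟩ = 0 → 0 < lam ⟨0, by omega⟩ →
            (∃ v : Fin n → ℝ,
              dotProduct v ((rankOneHess M (0 : Fin n → ℝ)).mulVec v) < 0)
            ∧ ¬ IsLocalMax (rankOneLoss M) (0 : Fin n → ℝ))) := by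
  have hsq k ε (hε : ε = 1 ∨ ε = -1) : (ε * √(lam k)) ^ 2 = lam k := sign_mul_sqrt_sq hε (hnonneg k)
  have hle_top (i : Fin n) : lam i ≤ lam ⟨0, by omega⟩ := hmono (Nat.zero_le _)
  have hlt_top (i : Fin n) (hi : i ≠ ⟨0, by omega⟩) : lam i < lam ⟨0, by omega⟩ :=
    (hmono (Nat.one_le_iff_ne_zero.mpr (Fin.val_ne_of_ne hi))).trans_lt hgap
  have hbot_le (i : Fin n) : lam ⟨n - 1, by omega⟩ ≤ lam i := hmono (Nat.le_sub_one_of_lt i.isLt)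
  have hquad := dotProduct_mulVec_eq_sum_of_eq_sum_smul_vecMulVec hdecomp
  refine ⟨⟨mulVec_vecMulVec_sub_self_eq_zero_iff M, by simp,
    fun k ε hε => mulVec_vecMulVec_sub_smul_eigvec_eq_zero horth hdecomp (hsq k ε hε)⟩,
    fun ε hε => ?_, fun k hk hpos ε hε => ?_, rankOneHess_zero M,
    fun hpos => isLocalMax_rankOneLoss_zero M hpos
      (le_dotProduct_mulVec_of_eq_sum_smul_vecMulVec horth hdecomp hbot_le),
    fun hbot htop => ⟨⟨u ⟨0, by omega⟩, ?_⟩,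
      not_isLocalMax_rankOneLoss_zero M (v := u ⟨n - 1, by omega⟩) ?_ ?_⟩⟩
  · have hglobal := rankOneLoss_smul_eigvec_le horth hdecomp (hsq _ ε hε) hle_top
    exact ⟨posDef_rankOneHess_smul_eigvec horth hdecomp (hsq _ ε hε)
      ((hnonneg _).trans_lt hgap) hlt_top, .of_forall hglobal, hglobal⟩
  · have hk0 : k ≠ ⟨0, by omega⟩ := fun h => by simp [h] at hk
    refine ⟨⟨u ⟨0, by omega⟩, ?_⟩, ⟨u k, ?_⟩⟩
    · rw [eigvec_dotProduct_rankOneHess_smul_eigvec_mulVec horth hdecomp (hsq k ε hε),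
        if_neg hk0.symm]
      linarith [hlt_top k hk0]
    · rw [eigvec_dotProduct_rankOneHess_smul_eigvec_mulVec horth hdecomp (hsq k ε hε), if_pos rfl]
      linarith
  · rw [rankOneHess_zero, neg_mulVec, dotProduct_neg, hquad,
      sum_mul_sq_dotProduct_of_orthonormal horth]
    linarith
  · exact fun h => by simpa [h] using horth ⟨n - 1, by omega⟩ ⟨n - 1, by omega⟩
  · rw [hquad, sum_mul_sq_dotProduct_of_orthonormal horth, hbot]
end

section
/- Let A₁, …, A_m ∈ ℝⁿˣⁿ be symmetric matrices such that 𝒜(X) = (m^{−1/2}·⟨Aᵢ, X⟩)_{1≤i≤m} satisfies the 4-RIP with RIP constant δ₄ ≤ 1/44. Let x⋆ ∈ ℝⁿ with x⋆ ≠ 0, let yᵢ = ⟨Aᵢ, x⋆x⋆ᵀ⟩, and let f(x) = (1/(4m))·Σᵢ (⟨Aᵢ, xxᵀ⟩ − yᵢ)². If ‖x₀ − x⋆‖₂ ≤ ‖x⋆‖₂/12, then the gradient descent iterates x_{t+1} = x_t − η_t·∇f(x_t) with constant step size η_t ≡ 1/(3·‖x⋆‖₂²) satisfy ‖x_t − x⋆‖₂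 ≤ (11/12)ᵗ · ‖x₀ − x⋆‖₂ for all t ≥ 0. -/
open Matrix

/-- The trace inner product `⟨X, Y⟩ = Tr(XᵀY)` of two real matrices. -/
def mip {p q : ℕ} (A B : Matrix (Fin p) (Fin q) ℝ) : ℝ :=
  Matrix.trace (Aᵀ * B)

/-!
The RIP makes the empirical form `(1/m) ∑ᵢ ⟨Aᵢ, X⟩⟨Aᵢ, Y⟩` `δ`-close to `⟨X, Y⟩` on pairs whose
span has low rank (polarize, then rescale `X` and `Y` to equal norms). Testing the gradient against
`u xᵀ` shows that it is within `δ ‖xxᵀ - x⋆x⋆ᵀ‖_F ‖x‖` of the population gradient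
`(xxᵀ - x⋆x⋆ᵀ) x`. Near `x⋆` the latter is `H (x - x⋆)` up to `O(‖x - x⋆‖²)`, where
`H = ‖x⋆‖² I + x⋆x⋆ᵀ` has eigenvalues `‖x⋆‖²` and `2‖x⋆‖²`, so a step of size `1/(3‖x⋆‖²)` along
`H (x - x⋆)` contracts by `2/3`. For `‖x - x⋆‖ ≤ ‖x⋆‖/12` and `δ ≤ 1/44` the quadratic remainder
and the RIP error cost at most another `1/4`, so every step contracts by `11/12` and the iterates
never leave the ball.
-/

open RealInnerProductSpace

lemma l2norm_eq_norm {p : ℕ} (v : Fin p → ℝ) : l2norm v = ‖WithLp.toLp 2 v‖ := by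
  simp [l2norm, EuclideanSpace.norm_eq]

lemma l2norm_nonneg {p : ℕ} (v : Fin p → ℝ) : 0 ≤ l2norm v := Real.sqrt_nonneg _

lemma frobNorm_eq_norm {p q : ℕ} (M : Matrix (Fin p) (Fin q) ℝ) :
    frobNorm M = ‖WithLp.toLp 2 M.vec‖ := by
  simp only [frobNorm, EuclideanSpace.norm_eq, vec, Real.norm_eq_abs, sq_abs,
    Fintype.sum_prod_type]
  rw [Finset.sum_comm]

lemma frobNorm_nonneg {p q : ℕ} (M : Matrix (Fin p) (Fin q) ℝ) : 0 ≤ frobNorm M :=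
  Real.sqrt_nonneg _

lemma real_inner_toLp_toLp {p : ℕ} (u v : Fin p → ℝ) :
    ⟪WithLp.toLp 2 u, WithLp.toLp 2 v⟫ = u ⬝ᵥ v := by
  rw [EuclideanSpace.inner_toLp_toLp, star_trivial, dotProduct_comm]

lemma mip_eq_inner {p q : ℕ} (A B : Matrix (Fin p) (Fin q) ℝ) :
    mip A B = ⟪WithLp.toLp 2 A.vec, WithLp.toLp 2 B.vec⟫ := by
  rw [EuclideanSpace.inner_toLp_toLp, star_trivial, dotProduct_comm, vec_dotProduct_vec, mip]

lemma l2norm_sq_eq_dotProduct {p : ℕ} (v : Fin p → ℝ) : l2norm v ^ 2 = v ⬝ᵥ v := by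
  rw [l2norm_eq_norm, ← real_inner_self_eq_norm_sq, real_inner_toLp_toLp]

lemma frobNorm_add_le {p q : ℕ} (M N : Matrix (Fin p) (Fin q) ℝ) :
    frobNorm (M + N) ≤ frobNorm M + frobNorm N := by
  simpa only [frobNorm_eq_norm, vec_add, WithLp.toLp_add] using norm_add_le _ _

lemma frobNorm_vecMulVec {p q : ℕ} (u : Fin p → ℝ) (v : Fin q → ℝ) :
    frobNorm (vecMulVec u v) = l2norm u * l2norm v := by
  rw [frobNorm, l2norm, l2norm, ← Real.sqrt_mul (by positivity), Finset.sum_mul]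
  simp only [vecMulVec_apply, mul_pow, Finset.mul_sum]

lemma mip_vecMulVec_right {p q : ℕ} (B : Matrix (Fin p) (Fin q) ℝ) (u : Fin p → ℝ)
    (v : Fin q → ℝ) : mip B (vecMulVec u v) = u ⬝ᵥ B *ᵥ v := by
  simp only [mip, trace, diag_apply, mul_apply, transpose_apply, vecMulVec_apply, dotProduct,
    mulVec, Finset.mul_sum]
  rw [Finset.sum_comm]
  simp only [mul_left_comm]

lemma rank_sum_vecMulVec_le {p q r : ℕ} (u : Fin r → Fin p → ℝ) (v : Fin r → Fin q → ℝ) :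
    (∑ k, vecMulVec (u k) (v k)).rank ≤ r := by
  have hfactor : ∑ k, vecMulVec (u k) (v k) = of (fun i k => u k i) * of (fun k j => v k j) := by
    ext i j
    simp [mul_apply, vecMulVec_apply, Matrix.sum_apply]
  rw [hfactor]
  exact (rank_mul_le_left _ _).trans (rank_le_width _)

section RestrictedIsometry

variable {ι E : Type*} [Fintype ι] [NormedAddCommGroup E] [InnerProductSpace ℝ E]

lemma sum_inner_sq_add_sub_sum_inner_sq_sub (a : ι → E) (u v : E) :
    ∑ i, ⟪a i, u + v⟫ ^ 2 - ∑ i, ⟪a i, u - v⟫ ^ 2 = 4 * ∑ i, ⟪a i, u⟫ * ⟪a i, v⟫ := by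
  rw [← Finset.sum_sub_distrib, Finset.mul_sum]
  refine Finset.sum_congr rfl fun i _ => ?_
  rw [inner_add_right, inner_sub_right]
  ring

lemma abs_sum_inner_mul_inner_sub_inner_le_of_add_of_sub (a : ι → E) (c δ : ℝ) {u v : E}
    (hadd : |c * ∑ i, ⟪a i, u + v⟫ ^ 2 - ‖u + v‖ ^ 2| ≤ δ * ‖u + v‖ ^ 2)
    (hsub : |c * ∑ i, ⟪a i, u - v⟫ ^ 2 - ‖u - v‖ ^ 2| ≤ δ * ‖u - v‖ ^ 2) :
    |c * ∑ i, ⟪a i, u⟫ * ⟪a i, v⟫ - ⟪u, v⟫| ≤ δ * (‖u‖ ^ 2 + ‖v‖ ^ 2) / 2 := by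
  have hpolar : c * ∑ i, ⟪a i, u + v⟫ ^ 2 - c * ∑ i, ⟪a i, u - v⟫ ^ 2
      = 4 * (c * ∑ i, ⟪a i, u⟫ * ⟪a i, v⟫) := by
    rw [← mul_sub, sum_inner_sq_add_sub_sum_inner_sq_sub]; ring
  have hparallelogram : δ * ‖u + v‖ ^ 2 + δ * ‖u - v‖ ^ 2 = δ * (2 * ‖u‖ ^ 2 + 2 * ‖v‖ ^ 2) := by
    rw [norm_add_sq_real, norm_sub_sq_real]; ring
  have hnorm_polar : ‖u + v‖ ^ 2 - ‖u - v‖ ^ 2 = 4 * ⟪u, v⟫ := by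
    rw [norm_add_sq_real, norm_sub_sq_real]; ring
  rw [abs_le] at hadd hsub ⊢
  constructor <;> linarith

lemma abs_sum_inner_mul_inner_sub_inner_le (a : ι → E) (c δ : ℝ) {u v : E}
    (hRIP : ∀ s t : ℝ,
      |c * ∑ i, ⟪a i, s • u + t • v⟫ ^ 2 - ‖s • u + t • v‖ ^ 2| ≤ δ * ‖s • u + t • v‖ ^ 2) :
    |c * ∑ i, ⟪a i, u⟫ * ⟪a i, v⟫ - ⟪u, v⟫| ≤ δ * ‖u‖ * ‖v‖ := by
  rcases eq_or_ne u 0 with rfl | hu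
  · simp
  rcases eq_or_ne v 0 with rfl | hv
  · simp
  -- `r` balances the two norms: `‖r • u‖ ^ 2 = ‖r⁻¹ • v‖ ^ 2 = ‖u‖ * ‖v‖`
  set r := √(‖v‖ / ‖u‖)
  have hr : 0 < r := Real.sqrt_pos.2 (by positivity)
  have hr2 : r ^ 2 = ‖v‖ / ‖u‖ := Real.sq_sqrt (by positivity)
  have key := abs_sum_inner_mul_inner_sub_inner_le_of_add_of_sub a c δ (u := r • u)
    (v := r⁻¹ • v) (by simpa [smul_smul] using hRIP r r⁻¹)
    (by simpa [sub_eq_add_neg, smul_smul] using hRIP r (-r⁻¹))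
  have hscale : ∀ i, ⟪a i, r • u⟫ * ⟪a i, r⁻¹ • v⟫ = ⟪a i, u⟫ * ⟪a i, v⟫ := fun i => by
    rw [inner_smul_right, inner_smul_right]; field_simp
  have hnorms : ‖r • u‖ ^ 2 + ‖r⁻¹ • v‖ ^ 2 = 2 * (‖u‖ * ‖v‖) := by
    rw [norm_smul, norm_smul, norm_inv, Real.norm_of_nonneg hr.le, mul_pow, mul_pow, inv_pow, hr2]
    field_simp
    ring
  simp only [hscale] at key
  rw [real_inner_smul_left, inner_smul_right, mul_inv_cancel_left₀ hr.ne', hnorms] at key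
  linarith

end RestrictedIsometry

def HasRIP {m p q : ℕ} (A : Fin m → Matrix (Fin p) (Fin q) ℝ) (r : ℕ) (δ : ℝ) : Prop :=
  ∀ X : Matrix (Fin p) (Fin q) ℝ, X.rank ≤ r →
    (1 - δ) * frobNorm X ^ 2 ≤ (1 / (m : ℝ)) * ∑ i, (mip (A i) X) ^ 2 ∧
    (1 / (m : ℝ)) * ∑ i, (mip (A i) X) ^ 2 ≤ (1 + δ) * frobNorm X ^ 2

namespace HasRIP

variable {m p q r : ℕ} {A : Fin m → Matrix (Fin p) (Fin q) ℝ} {δ : ℝ}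

lemma mono (h : HasRIP A r δ) {r' : ℕ} (hr : r' ≤ r) : HasRIP A r' δ :=
  fun X hX => h X (hX.trans hr)

lemma abs_sub_le (h : HasRIP A r δ) {X : Matrix (Fin p) (Fin q) ℝ} (hX : X.rank ≤ r) :
    |(1 / (m : ℝ)) * ∑ i, (mip (A i) X) ^ 2 - frobNorm X ^ 2| ≤ δ * frobNorm X ^ 2 := by
  obtain ⟨hlow, hup⟩ := h X hX
  rw [abs_le]
  constructor <;> linarith

lemma nonneg (h : HasRIP A r δ) {X : Matrix (Fin p) (Fin q) ℝ} (hX : X.rank ≤ r)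
    (hX0 : 0 < frobNorm X) : 0 ≤ δ := by
  obtain ⟨hlow, hup⟩ := h X hX
  nlinarith [pow_pos hX0 2]

lemma abs_sum_mip_mul_mip_sub_mip_le (h : HasRIP A r δ) {X Y : Matrix (Fin p) (Fin q) ℝ}
    (hXY : ∀ s t : ℝ, (s • X + t • Y).rank ≤ r) :
    |(1 / (m : ℝ)) * ∑ i, mip (A i) X * mip (A i) Y - mip X Y|
      ≤ δ * frobNorm X * frobNorm Y := by
  simp only [mip_eq_inner, frobNorm_eq_norm]
  refine abs_sum_inner_mul_inner_sub_inner_le _ _ _ fun s t => ?_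
  simpa only [mip_eq_inner, frobNorm_eq_norm, vec_add, vec_smul, WithLp.toLp_add,
    WithLp.toLp_smul] using h.abs_sub_le (hXY s t)

end HasRIP

section PopulationStep

variable {E : Type*} [NormedAddCommGroup E] [InnerProductSpace ℝ E]

def populationGrad (xs x : E) : E := ‖x‖ ^ 2 • x - ⟪xs, x⟫ • xs

def populationHessian (xs d : E) : E := ‖xs‖ ^ 2 • d + ⟪xs, d⟫ • xs

lemma norm_sub_smul_populationHessian_le {xs : E} (hxs : xs ≠ 0) (d : E) :
    ‖d - (1 / (3 * ‖xs‖ ^ 2)) • populationHessian xs d‖ ≤ 2 / 3 * ‖d‖ := by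
  have hs : ‖xs‖ ≠ 0 := norm_ne_zero_iff.2 hxs
  have hform : d - (1 / (3 * ‖xs‖ ^ 2)) • populationHessian xs d
      = (2 / 3 : ℝ) • d - (⟪xs, d⟫ / (3 * ‖xs‖ ^ 2)) • xs := by
    simp only [populationHessian, smul_add, smul_smul]
    match_scalars <;> field_simp; ring
  have hsq : ‖d - (1 / (3 * ‖xs‖ ^ 2)) • populationHessian xs d‖ ^ 2
      = (2 / 3 * ‖d‖) ^ 2 - ⟪xs, d⟫ ^ 2 / (3 * ‖xs‖ ^ 2) := by
    rw [hform, norm_sub_sq_real, real_inner_smul_left, real_inner_smul_right, norm_smul,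
      norm_smul, Real.norm_eq_abs, Real.norm_eq_abs, mul_pow, mul_pow, sq_abs, sq_abs,
      real_inner_comm]
    field_simp
    ring
  refine (pow_le_pow_iff_left₀ (norm_nonneg _) (by positivity) two_ne_zero).1 ?_
  rw [hsq]
  have : 0 ≤ ⟪xs, d⟫ ^ 2 / (3 * ‖xs‖ ^ 2) := by positivity
  linarith

lemma norm_populationGrad_sub_populationHessian_le (xs d : E) :
    ‖populationGrad xs (xs + d) - populationHessian xs d‖ ≤ ‖d‖ ^ 2 * (3 * ‖xs‖ + ‖d‖) := by
  have hform : populationGrad xs (xs + d) - populationHessian xs d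
      = ‖d‖ ^ 2 • xs + (2 * ⟪xs, d⟫ + ‖d‖ ^ 2) • d := by
    rw [populationGrad, populationHessian, norm_add_sq_real, inner_add_right,
      real_inner_self_eq_norm_sq]
    module
  have hcoef : |2 * ⟪xs, d⟫ + ‖d‖ ^ 2| ≤ 2 * ‖xs‖ * ‖d‖ + ‖d‖ ^ 2 := by
    have := abs_real_inner_le_norm xs d
    rw [abs_le] at this ⊢
    constructor <;> nlinarith [sq_nonneg ‖d‖]
  rw [hform]
  calc ‖‖d‖ ^ 2 • xs + (2 * ⟪xs, d⟫ + ‖d‖ ^ 2) • d‖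
      ≤ ‖d‖ ^ 2 * ‖xs‖ + |2 * ⟪xs, d⟫ + ‖d‖ ^ 2| * ‖d‖ := by
        refine (norm_add_le _ _).trans_eq ?_
        rw [norm_smul, norm_smul, Real.norm_eq_abs, Real.norm_eq_abs, abs_of_nonneg (sq_nonneg _)]
    _ ≤ ‖d‖ ^ 2 * ‖xs‖ + (2 * ‖xs‖ * ‖d‖ + ‖d‖ ^ 2) * ‖d‖ := by gcongr
    _ = ‖d‖ ^ 2 * (3 * ‖xs‖ + ‖d‖) := by ring

lemma norm_step_sub_le_of_near_populationGrad {xs x g : E} (hxs : xs ≠ 0)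
    (hx : ‖x - xs‖ ≤ ‖xs‖ / 12)
    (hg : ‖g - populationGrad xs x‖ ≤ ‖x - xs‖ * (2 * ‖xs‖ + ‖x - xs‖) * ‖x‖ / 44) :
    ‖x - (1 / (3 * ‖xs‖ ^ 2)) • g - xs‖ ≤ 11 / 12 * ‖x - xs‖ := by
  set d := x - xs
  set s := ‖xs‖
  set η := 1 / (3 * s ^ 2)
  have hs : 0 < s := norm_pos_iff.2 hxs
  have hxd : x = xs + d := by simp [d]
  have hη : 0 < η := by positivity
  have hsplit : x - η • g - xs = (d - η • populationHessian xs d)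
      - η • (populationGrad xs x - populationHessian xs d) - η • (g - populationGrad xs x) := by
    simp only [d]; module
  have hlin := norm_sub_smul_populationHessian_le hxs d
  have hrem := norm_populationGrad_sub_populationHessian_le xs d
  rw [← hxd] at hrem
  have hd0 := norm_nonneg d
  have hg' : ‖g - populationGrad xs x‖ ≤ ‖d‖ * (2 * s + ‖d‖) * (s + ‖d‖) / 44 :=
    hg.trans (by gcongr; exact hxd ▸ norm_add_le xs d)
  have hpoly : ‖d‖ ^ 2 * (3 * s + ‖d‖) + ‖d‖ * (2 * s + ‖d‖) * (s + ‖d‖) / 44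
      ≤ 3 / 4 * s ^ 2 * ‖d‖ := by
    have hde : ‖d‖ * ‖d‖ ≤ s / 12 * ‖d‖ := mul_le_mul_of_nonneg_right hx hd0
    nlinarith [mul_le_mul_of_nonneg_left hde hd0, mul_le_mul_of_nonneg_left hde hs.le]
  have hηs : η * s ^ 2 = 1 / 3 := by simp only [η]; field_simp
  calc ‖x - η • g - xs‖
      ≤ ‖d - η • populationHessian xs d‖ + η * ‖populationGrad xs x - populationHessian xs d‖
          + η * ‖g - populationGrad xs x‖ := by
        have hnorm_smul : ∀ v : E, η * ‖v‖ = ‖η • v‖ := fun v => by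
          rw [norm_smul, Real.norm_of_nonneg hη.le]
        rw [hsplit, hnorm_smul, hnorm_smul]
        exact (norm_sub_le _ _).trans (add_le_add (norm_sub_le _ _) le_rfl)
    _ ≤ 2 / 3 * ‖d‖ + η * (‖d‖ ^ 2 * (3 * s + ‖d‖) + ‖d‖ * (2 * s + ‖d‖) * (s + ‖d‖) / 44) := by
        linarith [mul_le_mul_of_nonneg_left hrem hη.le, mul_le_mul_of_nonneg_left hg' hη.le]
    _ ≤ 2 / 3 * ‖d‖ + η * (3 / 4 * s ^ 2 * ‖d‖) := by gcongr
    _ = 11 / 12 * ‖d‖ := by linear_combination 3 / 4 * ‖d‖ * hηs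

lemma toLp_vecMulVec_sub_vecMulVec_mulVec {p : ℕ} (xs x : Fin p → ℝ) :
    WithLp.toLp 2 ((vecMulVec x x - vecMulVec xs xs) *ᵥ x)
      = populationGrad (WithLp.toLp 2 xs) (WithLp.toLp 2 x) := by
  rw [populationGrad, ← real_inner_self_eq_norm_sq, real_inner_toLp_toLp, real_inner_toLp_toLp,
    sub_mulVec, vecMulVec_mulVec, vecMulVec_mulVec]
  simp

end PopulationStep

section Sensing

variable {m n : ℕ} {A : Fin m → Matrix (Fin n) (Fin n) ℝ}

noncomputable def sensingGrad (A : Fin m → Matrix (Fin n) (Fin n) ℝ) (xs x : Fin n → ℝ) :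
    Fin n → ℝ :=
  (1 / (m : ℝ)) • ∑ i, mip (A i) (vecMulVec x x - vecMulVec xs xs) • (A i) *ᵥ x

lemma dotProduct_sensingGrad (xs x u : Fin n → ℝ) :
    u ⬝ᵥ sensingGrad A xs x = (1 / (m : ℝ)) *
      ∑ i, mip (A i) (vecMulVec x x - vecMulVec xs xs) * mip (A i) (vecMulVec u x) := by
  simp only [sensingGrad, dotProduct_smul, dotProduct_sum, mip_vecMulVec_right, smul_eq_mul]

lemma rank_smul_vecMulVec_sub_add_smul_vecMulVec_le (xs x u : Fin n → ℝ) (s t : ℝ) :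
    (s • (vecMulVec x x - vecMulVec xs xs) + t • vecMulVec u x).rank ≤ 3 := by
  have hsum : s • (vecMulVec x x - vecMulVec xs xs) + t • vecMulVec u x
      = ∑ k, vecMulVec (![s • x, -(s • xs), t • u] k) (![x, xs, x] k) := by
    simp only [Fin.sum_univ_three, cons_val, smul_vecMulVec, neg_vecMulVec]
    module
  exact hsum ▸ rank_sum_vecMulVec_le _ _

lemma l2norm_sensingGrad_sub_le {δ : ℝ} (hRIP : HasRIP A 3 δ) (hδ : 0 ≤ δ) (xs x : Fin n → ℝ) :
    l2norm (sensingGrad A xs x - (vecMulVec x x - vecMulVec xs xs) *ᵥ x)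
      ≤ δ * frobNorm (vecMulVec x x - vecMulVec xs xs) * l2norm x := by
  set Δ := vecMulVec x x - vecMulVec xs xs
  set u := sensingGrad A xs x - Δ *ᵥ x
  have hcross := hRIP.abs_sum_mip_mul_mip_sub_mip_le
    (rank_smul_vecMulVec_sub_add_smul_vecMulVec_le xs x u)
  have hu : l2norm u ^ 2 = (1 / (m : ℝ)) * ∑ i, mip (A i) Δ * mip (A i) (vecMulVec u x)
      - mip Δ (vecMulVec u x) := by
    rw [l2norm_sq_eq_dotProduct, mip_vecMulVec_right, ← dotProduct_sensingGrad]
    exact dotProduct_sub u _ _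
  have hsq : l2norm u * l2norm u ≤ δ * frobNorm Δ * l2norm x * l2norm u := by
    rw [← sq, hu]
    refine (le_abs_self _).trans (hcross.trans_eq ?_)
    rw [frobNorm_vecMulVec]; ring
  rcases (l2norm_nonneg u).eq_or_lt with hu0 | hu0
  · rw [← hu0]; exact mul_nonneg (mul_nonneg hδ (frobNorm_nonneg _)) (l2norm_nonneg _)
  · exact le_of_mul_le_mul_right hsq hu0

lemma frobNorm_vecMulVec_sub_le (xs x : Fin n → ℝ) :
    frobNorm (vecMulVec x x - vecMulVec xs xs)
      ≤ l2norm (x - xs) * (2 * l2norm xs + l2norm (x - xs)) := by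
  set d := x - xs
  have hdecomp : vecMulVec x x - vecMulVec xs xs
      = vecMulVec xs d + vecMulVec d xs + vecMulVec d d := by
    simp only [d, vecMulVec_sub, sub_vecMulVec]
    abel
  calc frobNorm (vecMulVec x x - vecMulVec xs xs)
      ≤ frobNorm (vecMulVec xs d) + frobNorm (vecMulVec d xs) + frobNorm (vecMulVec d d) := by
        rw [hdecomp]
        exact (frobNorm_add_le _ _).trans (add_le_add_left (frobNorm_add_le _ _) _)
    _ = l2norm d * (2 * l2norm xs + l2norm d) := by
        simp only [frobNorm_vecMulVec]; ring

lemma l2norm_sensingGrad_step_sub_le {δ : ℝ} (hRIP : HasRIP A 3 δ) (hδ0 : 0 ≤ δ)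
    (hδ : δ ≤ 1 / 44) {xs x : Fin n → ℝ} (hxs : xs ≠ 0) (hx : l2norm (x - xs) ≤ l2norm xs / 12) :
    l2norm (x - (1 / (3 * l2norm xs ^ 2)) • sensingGrad A xs x - xs)
      ≤ 11 / 12 * l2norm (x - xs) := by
  have hgrad : l2norm (sensingGrad A xs x - (vecMulVec x x - vecMulVec xs xs) *ᵥ x)
      ≤ l2norm (x - xs) * (2 * l2norm xs + l2norm (x - xs)) * l2norm x / 44 := by
    refine (l2norm_sensingGrad_sub_le hRIP hδ0 xs x).trans ?_
    have hx0 := l2norm_nonneg x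
    have hΔ0 := frobNorm_nonneg (vecMulVec x x - vecMulVec xs xs)
    calc δ * frobNorm (vecMulVec x x - vecMulVec xs xs) * l2norm x
        ≤ 1 / 44 * frobNorm (vecMulVec x x - vecMulVec xs xs) * l2norm x := by gcongr
      _ ≤ 1 / 44 * (l2norm (x - xs) * (2 * l2norm xs + l2norm (x - xs))) * l2norm x := by
        gcongr; exact frobNorm_vecMulVec_sub_le xs x
      _ = _ := by ring
  simp only [l2norm_eq_norm, WithLp.toLp_sub, WithLp.toLp_smul,
    toLp_vecMulVec_sub_vecMulVec_mulVec] at hx hgrad ⊢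
  exact norm_step_sub_le_of_near_populationGrad (by simpa using hxs) hx hgrad

end Sensing

lemma le_pow_mul_of_local_contraction {d : ℕ → ℝ} {q R : ℝ} (hq0 : 0 ≤ q) (hq1 : q ≤ 1)
    (hd0 : 0 ≤ d 0) (hR : d 0 ≤ R) (hstep : ∀ t, d t ≤ R → d (t + 1) ≤ q * d t) :
    ∀ t, d t ≤ q ^ t * d 0 := by
  intro t
  induction t with
  | zero => simp
  | succ t ih =>
    have hR' : d t ≤ R := ih.trans <| (mul_le_of_le_one_left hd0 (pow_le_one₀ hq0 hq1)).trans hR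
    calc d (t + 1) ≤ q * d t := hstep t hR'
      _ ≤ q * (q ^ t * d 0) := by gcongr
      _ = q ^ (t + 1) * d 0 := by ring

theorem gd_rank_one_matrix_sensing_convergence_general
    (n m : ℕ)
    (A : Fin m → Matrix (Fin n) (Fin n) ℝ)
    (δ : ℝ) (hδ : δ ≤ 1 / 44)
    (hRIP : ∀ X : Matrix (Fin n) (Fin n) ℝ, X.rank ≤ 4 →
      (1 - δ) * frobNorm X ^ 2 ≤ (1 / (m : ℝ)) * ∑ i, (mip (A i) X) ^ 2 ∧
      (1 / (m : ℝ)) * ∑ i, (mip (A i) X) ^ 2 ≤ (1 + δ) * frobNorm X ^ 2)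
    (xstar : Fin n → ℝ) (hxstar : xstar ≠ 0)
    (x : ℕ → (Fin n → ℝ))
    (hinit : l2norm (x 0 - xstar) ≤ l2norm xstar / 12)
    (hupd : ∀ t : ℕ, x (t + 1) =
      x t - (1 / (3 * l2norm xstar ^ 2)) •
        ((1 / (m : ℝ)) • ∑ i,
          mip (A i) (Matrix.vecMulVec (x t) (x t) - Matrix.vecMulVec xstar xstar) •
            Matrix.mulVec (A i) (x t))) :
    ∀ t : ℕ, l2norm (x t - xstar) ≤ (11 / 12) ^ t * l2norm (x 0 - xstar) := by
  have hRIP3 : HasRIP A 3 δ := (show HasRIP A 4 δ from hRIP).mono (by norm_num)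
  have hδ0 : 0 ≤ δ := hRIP3.nonneg ((rank_vecMulVec_le xstar xstar).trans (by norm_num)) <| by
    rw [frobNorm_vecMulVec, l2norm_eq_norm]
    exact mul_self_pos.2 (norm_ne_zero_iff.2 (by simpa using hxstar))
  refine le_pow_mul_of_local_contraction (by norm_num) (by norm_num) (l2norm_nonneg _) hinit
    fun t ht => ?_
  rw [hupd t]
  exact l2norm_sensingGrad_step_sub_le hRIP3 hδ0 hδ hxstar ht

/-- **Local linear convergence of gradient descent for rank-1 matrix sensing.**
Suppose the symmetric sensing matrices `Aᵢ` induce an operator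
`𝒜(X) = (m^{-1/2}⟨Aᵢ, X⟩)ᵢ` satisfying the `4`-RIP with constant `δ₄ ≤ 1/44`, let
`yᵢ = ⟨Aᵢ, x⋆x⋆ᵀ⟩` and `f(x) = (1/4m) ∑ᵢ (⟨Aᵢ, xxᵀ⟩ − yᵢ)²` whose gradient is
`∇f(x) = (1/m) ∑ᵢ ⟨Aᵢ, xxᵀ − x⋆x⋆ᵀ⟩ Aᵢx`. If `‖x₀ − x⋆‖₂ ≤ ‖x⋆‖₂/12`, then gradient
descent with constant step size `1/(3‖x⋆‖₂²)` satisfies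
`‖x_t − x⋆‖₂ ≤ (11/12)ᵗ ‖x₀ − x⋆‖₂` for all `t ≥ 0`. -/
theorem gd_rank_one_matrix_sensing_convergence
    (n m : ℕ)
    (A : Fin m → Matrix (Fin n) (Fin n) ℝ)
    (hsym : ∀ i, (A i)ᵀ = A i)
    (δ : ℝ) (hδ : δ ≤ 1 / 44)
    (hRIP : ∀ X : Matrix (Fin n) (Fin n) ℝ, X.rank ≤ 4 →
      (1 - δ) * frobNorm X ^ 2 ≤ (1 / (m : ℝ)) * ∑ i, (mip (A i) X) ^ 2 ∧
      (1 / (m : ℝ)) * ∑ i, (mip (A i) X) ^ 2 ≤ (1 + δ) * frobNorm X ^ 2)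
    (xstar : Fin n → ℝ) (hxstar : xstar ≠ 0)
    (x : ℕ → (Fin n → ℝ))
    (hinit : l2norm (x 0 - xstar) ≤ l2norm xstar / 12)
    (hupd : ∀ t : ℕ, x (t + 1) =
      x t - (1 / (3 * l2norm xstar ^ 2)) •
        ((1 / (m : ℝ)) • ∑ i,
          mip (A i) (Matrix.vecMulVec (x t) (x t) - Matrix.vecMulVec xstar xstar) •
            Matrix.mulVec (A i) (x t))) :
    ∀ t : ℕ, l2norm (x t - xstar) ≤ (11 / 12) ^ t * l2norm (x 0 - xstar) :=
  gd_rank_one_matrix_sensing_convergence_general n m A δ hδ hRIP xstar hxstar x hinit hupd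
end
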